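/- arXiv:1005.0471 — 2 statements merged into one kernel-verified Lean document; each statement's English description precedes it below -/
import Mathlib

section
/- Let α, β > −1 be real numbers and let k ≥ 1 be an integer. Define g(u) = (P̂_k^{(α,β)}(u))² + (1−u²)/(k(k+α+β+1)) · ((d/du) P̂_k^{(α,β)}(u))². Then g′(u) = 2((α+β+1)u + α − β)/(k(k+α+β+1)) · ((d/du) P̂_k^{(α,β)}(u))² for all u. In particular, if α ≥ 0 and α ≥ β, then g is nondecreasing on the interval [0, 1]. -/
/-- Generalized binomial coefficient `C(a, j) = a(a-1)⋯(a-j+1)/j!` for real `a`. -/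
noncomputable def genBinom (a : ℝ) (j : ℕ) : ℝ :=
  (∏ i ∈ Finset.range j, (a - i)) / (Nat.factorial j)

/-- The Jacobi polynomial
`P_k^{(α,β)}(x) = Σ_{m=0}^k C(k+α, k-m)·C(k+β, m)·((x-1)/2)^m·((x+1)/2)^{k-m}`. -/
noncomputable def jacobiP (α β : ℝ) (k : ℕ) (x : ℝ) : ℝ :=
  ∑ m ∈ Finset.range (k + 1),
    genBinom ((k : ℝ) + α) (k - m) * genBinom ((k : ℝ) + β) m *
      ((x - 1) / 2) ^ m * ((x + 1) / 2) ^ (k - m)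

/-- The normalized Jacobi polynomial `P̂_k^{(α,β)} = P_k^{(α,β)} / C(k+α, k)`,
so that `P̂_k^{(α,β)}(1) = 1`. -/
noncomputable def jacobiPN (α β : ℝ) (k : ℕ) (x : ℝ) : ℝ :=
  jacobiP α β k x / genBinom ((k : ℝ) + α) k

/-!
In the variable `t = (x - 1) / 2` one has `(x + 1) / 2 = t + 1`; expanding `(t + 1) ^ (k - m)` and
collecting powers of `t` by Chu–Vandermonde gives `P_k^{(α,β)}` the coefficients
`C(k+α, k-n) · C(k+α+β+n, n)`. Their ratio is a hypergeometric recurrence, which read off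
coefficientwise is the Jacobi differential equation. Differentiating `g` and eliminating `y''`
with that equation leaves `2((α+β+1)u + α - β)/(k(k+α+β+1)) · y'²`, which is nonnegative on
`[0, 1]` when `α ≥ 0` and `α ≥ β`.
-/

open Polynomial Finset

theorem genBinom_eq_choose (a : ℝ) (j : ℕ) : genBinom a j = Ring.choose a j := by
  rw [Ring.choose_eq_smul, ← aeval_eq_smeval, aeval_def, eval₂_eq_eval_map, descPochhammer_map,
    descPochhammer_eval_eq_prod_range, genBinom, smul_eq_mul, div_eq_inv_mul]

theorem genBinom_succ_mul (a : ℝ) (j : ℕ) :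
    genBinom a (j + 1) * (j + 1) = genBinom a j * (a - j) := by
  simp only [genBinom, prod_range_succ, Nat.factorial_succ, Nat.cast_mul, Nat.cast_succ]
  field_simp

theorem genBinom_add_one_succ_mul (a : ℝ) (j : ℕ) :
    genBinom (a + 1) (j + 1) * (j + 1) = genBinom a j * (a + 1) := by
  have hprod : ∏ i ∈ range (j + 1), (a + 1 - i) = (a + 1) * ∏ i ∈ range j, (a - i) := by
    rw [prod_range_succ']
    simp only [Nat.cast_succ, Nat.cast_zero, sub_zero, add_sub_add_right_eq_sub, mul_comm]
  simp only [genBinom, hprod, Nat.factorial_succ, Nat.cast_mul, Nat.cast_succ]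
  field_simp

/-- Trinomial revision `C(a, k-m) C(k-m, n-m) = C(a, k-n) C(a-k+n, n-m)`, then Chu–Vandermonde. -/
theorem sum_genBinom_mul_choose (a b : ℝ) {k n : ℕ} (hn : n ≤ k) :
    ∑ m ∈ range (n + 1), genBinom a (k - m) * genBinom b m * (k - m).choose (n - m) =
      genBinom a (k - n) * genBinom (a + b - k + n) n := by
  have hsplit : ∀ m ∈ range (n + 1), genBinom a (k - m) * genBinom b m * (k - m).choose (n - m) =
      genBinom a (k - n) * (genBinom b m * genBinom (a - (k - n : ℕ)) (n - m)) := by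
    intro m hm
    have hm : m ≤ n := Nat.lt_succ_iff.mp (mem_range.mp hm)
    have htri := Ring.choose_smul_choose a (show k - n ≤ k - m by omega)
    rw [Nat.choose_symm_of_eq_add (show k - m = (k - n) + (n - m) by omega),
      show k - m - (k - n) = n - m by omega, nsmul_eq_mul] at htri
    simp only [genBinom_eq_choose]
    linear_combination (Ring.choose b m) * htri
  rw [sum_congr rfl hsplit, ← mul_sum, Nat.cast_sub hn, genBinom_eq_choose (a + b - k + n),
    show a + b - k + n = b + (a - (k - n)) by ring, Ring.add_choose_eq n (Commute.all _ _),
    Nat.sum_antidiagonal_eq_sum_range_succ_mk]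
  simp only [genBinom_eq_choose]

theorem hypergeometric_ode_of_coeff_recurrence {S : ℝ[X]} {c d μ : ℝ}
    (hS : ∀ n : ℕ, (n + 1) * (n + c) * S.coeff (n + 1) = (μ - n * (n + d)) * S.coeff n) :
    X * (X + 1) * derivative (derivative S) + (C c + C (d + 1) * X) * derivative S = C μ * S := by
  ext n
  rw [show X * (X + 1) * derivative (derivative S) + (C c + C (d + 1) * X) * derivative S =
      X ^ 2 * derivative (derivative S) + X ^ 1 * derivative (derivative S) +
        C c * derivative S + C (d + 1) * (X ^ 1 * derivative S) by ring]
  simp only [coeff_add, coeff_C_mul, coeff_X_pow_mul', coeff_derivative]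
  rcases n with _ | _ | n
  · simp only [nonpos_iff_eq_zero, OfNat.ofNat_ne_zero, ↓reduceIte, one_ne_zero, add_zero,
      zero_add, CharP.cast_eq_zero, mul_one, mul_zero]
    linear_combination hS 0
  · simp only [zero_add, Nat.not_ofNat_le_one, ↓reduceIte, le_refl, tsub_self, Nat.reduceAdd,
      Nat.cast_one, CharP.cast_eq_zero, mul_one]
    linear_combination hS 1
  · have h := hS (n + 2)
    simp only [Nat.cast_add, Nat.cast_ofNat] at h ⊢
    simp only [le_add_iff_nonneg_left, zero_le, ↓reduceIte, Nat.reduceSubDiff, Nat.cast_one,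
      add_tsub_cancel_right, Nat.cast_add]
    linear_combination h

noncomputable def jacobiShiftedCoeff (α β : ℝ) (k n : ℕ) : ℝ :=
  if n ≤ k then genBinom (k + α) (k - n) * genBinom (k + α + β + n) n else 0

/-- `P_k^{(α,β)}` as a polynomial in `t = (x - 1) / 2`. -/
noncomputable def jacobiShifted (α β : ℝ) (k : ℕ) : ℝ[X] :=
  ∑ m ∈ range (k + 1),
    C (genBinom (k + α) (k - m) * genBinom (k + β) m) * X ^ m * (X + 1) ^ (k - m)

theorem jacobiP_eq_eval_jacobiShifted (α β : ℝ) (k : ℕ) (x : ℝ) :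
    jacobiP α β k x = (jacobiShifted α β k).eval ((x - 1) / 2) := by
  simp only [jacobiP, jacobiShifted, eval_finsetSum, eval_mul, eval_C, eval_pow, eval_X,
    eval_add, eval_one]
  congr! 3
  ring

theorem coeff_jacobiShifted (α β : ℝ) (k n : ℕ) :
    (jacobiShifted α β k).coeff n = jacobiShiftedCoeff α β k n := by
  simp only [jacobiShifted, finsetSum_coeff, mul_assoc, coeff_C_mul, coeff_X_pow_mul',
    coeff_X_add_one_pow, mul_ite, mul_zero]
  rw [sum_ite, sum_const_zero, add_zero, jacobiShiftedCoeff]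
  split_ifs with hn
  · rw [show (range (k + 1)).filter (· ≤ n) = range (n + 1) by ext; simp; omega,
      show (k : ℝ) + α + β + n = (k + α) + (k + β) - k + n by ring,
      ← sum_genBinom_mul_choose _ _ hn]
    simp only [mul_assoc]
  · refine sum_eq_zero fun m hm => ?_
    rw [Nat.choose_eq_zero_of_lt (by simp at hm; omega), Nat.cast_zero, mul_zero, mul_zero]

theorem jacobiShiftedCoeff_succ (α β : ℝ) (k n : ℕ) :
    (n + 1) * (n + (α + 1)) * jacobiShiftedCoeff α β k (n + 1) =
      (k * (k + α + β + 1) - n * (n + (α + β + 1))) * jacobiShiftedCoeff α β k n := by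
  rcases lt_trichotomy n k with hnk | rfl | hkn
  · have ha : genBinom (k + α) (k - n) * (k - n) =
        genBinom (k + α) (k - (n + 1)) * (n + α + 1) := by
      have h := genBinom_succ_mul (k + α) (k - (n + 1))
      rw [show k - (n + 1) + 1 = k - n by omega, Nat.cast_sub (show n + 1 ≤ k from hnk)] at h
      push_cast at h
      linear_combination h
    have hb := genBinom_add_one_succ_mul (k + α + β + n) n
    simp only [jacobiShiftedCoeff, if_pos (show n + 1 ≤ k from hnk), if_pos hnk.le, Nat.cast_succ,
      ← add_assoc]
    linear_combination (n + α + 1) * genBinom (k + α) (k - (n + 1)) * hb -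
      genBinom (k + α + β + n) n * (k + α + β + n + 1) * ha
  · simp only [jacobiShiftedCoeff, if_neg (Nat.not_succ_le_self _), if_pos le_rfl]
    ring
  · simp only [jacobiShiftedCoeff, if_neg (show ¬ n + 1 ≤ k by omega), if_neg (not_le.mpr hkn)]
    ring

theorem jacobiShifted_ode (α β : ℝ) (k : ℕ) :
    X * (X + 1) * derivative (derivative (jacobiShifted α β k)) +
        (C (α + 1) + C (α + β + 2) * X) * derivative (jacobiShifted α β k) =
      C (k * (k + α + β + 1)) * jacobiShifted α β k := by
  rw [show α + β + 2 = α + β + 1 + 1 by ring]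
  exact hypergeometric_ode_of_coeff_recurrence fun n => by
    simpa only [coeff_jacobiShifted] using jacobiShiftedCoeff_succ α β k n

theorem hasDerivAt_const_mul_eval_half_sub (c : ℝ) (S : ℝ[X]) (x : ℝ) :
    HasDerivAt (fun x => c * S.eval ((x - 1) / 2))
      (c / 2 * (derivative S).eval ((x - 1) / 2)) x := by
  have hlin : HasDerivAt (fun x : ℝ => (x - 1) / 2) (1 / 2) x :=
    ((hasDerivAt_id x).sub_const 1).div_const 2
  exact (((S.hasDerivAt _).comp x hlin).const_mul c).congr_deriv (by ring)

theorem deriv_const_mul_eval_half_sub (c : ℝ) (S : ℝ[X]) :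
    deriv (fun x => c * S.eval ((x - 1) / 2)) =
      fun x => c / 2 * (derivative S).eval ((x - 1) / 2) :=
  funext fun x => (hasDerivAt_const_mul_eval_half_sub c S x).deriv

theorem jacobiPN_eq (α β : ℝ) (k : ℕ) :
    jacobiPN α β k =
      fun x => (genBinom (k + α) k)⁻¹ * (jacobiShifted α β k).eval ((x - 1) / 2) := by
  ext x
  rw [jacobiPN, jacobiP_eq_eval_jacobiShifted, div_eq_inv_mul]

theorem differentiable_jacobiPN (α β : ℝ) (k : ℕ) : Differentiable ℝ (jacobiPN α β k) := by
  rw [jacobiPN_eq]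
  exact fun x => (hasDerivAt_const_mul_eval_half_sub _ _ x).differentiableAt

theorem differentiable_deriv_jacobiPN (α β : ℝ) (k : ℕ) :
    Differentiable ℝ (deriv (jacobiPN α β k)) := by
  rw [jacobiPN_eq, deriv_const_mul_eval_half_sub]
  exact fun x => (hasDerivAt_const_mul_eval_half_sub _ _ x).differentiableAt

theorem jacobiPN_ode (α β : ℝ) (k : ℕ) (x : ℝ) :
    (1 - x ^ 2) * deriv (deriv (jacobiPN α β k)) x +
        (β - α - (α + β + 2) * x) * deriv (jacobiPN α β k) x +
      k * (k + α + β + 1) * jacobiPN α β k x = 0 := by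
  have h := congrArg (eval ((x - 1) / 2)) (jacobiShifted_ode α β k)
  simp only [eval_add, eval_mul, eval_X, eval_one, eval_C] at h
  simp only [jacobiPN_eq, deriv_const_mul_eval_half_sub]
  linear_combination (-(genBinom (k + α) k)⁻¹) * h

theorem hasDerivAt_energy_of_jacobi_ode {y y' : ℝ → ℝ} {y'' α β μ u : ℝ} (hμ : μ ≠ 0)
    (hy : HasDerivAt y (y' u) u) (hy' : HasDerivAt y' y'' u)
    (hode : (1 - u ^ 2) * y'' + (β - α - (α + β + 2) * u) * y' u + μ * y u = 0) :
    HasDerivAt (fun u => y u ^ 2 + (1 - u ^ 2) / μ * y' u ^ 2)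
      (2 * ((α + β + 1) * u + α - β) / μ * y' u ^ 2) u := by
  refine ((hy.fun_pow 2).add ((((hasDerivAt_pow 2 u).const_sub 1).div_const μ).mul
    (hy'.fun_pow 2))).congr_deriv ?_
  field_simp
  linear_combination (2 * y' u) * hode

/-- for `α, β > -1` and `k ≥ 1`, the function
`g(u) = (P̂_k^{(α,β)}(u))² + (1-u²)/(k(k+α+β+1))·(P̂_k^{(α,β)})'(u)²`
has derivative
`g'(u) = 2((α+β+1)u + α - β)/(k(k+α+β+1))·(P̂_k^{(α,β)})'(u)²`
for every `u`; in particular, if `α ≥ 0` and `α ≥ β`, then `g` is nondecreasing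
on `[0, 1]`. -/
theorem jacobi_g_derivative_and_monotone
    (α β : ℝ) (hα : -1 < α) (hβ : -1 < β) (k : ℕ) (hk : 1 ≤ k)
    (g : ℝ → ℝ)
    (hg : g = fun u => (jacobiPN α β k u) ^ 2 +
      (1 - u ^ 2) / ((k : ℝ) * ((k : ℝ) + α + β + 1)) *
        (deriv (jacobiPN α β k) u) ^ 2) :
    (∀ u : ℝ, deriv g u =
        2 * ((α + β + 1) * u + α - β) / ((k : ℝ) * ((k : ℝ) + α + β + 1)) *
          (deriv (jacobiPN α β k) u) ^ 2) ∧
      (0 ≤ α → β ≤ α → MonotoneOn g (Set.Icc (0 : ℝ) 1)) := by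
  have hμ : 0 < (k : ℝ) * (k + α + β + 1) := by
    have hk' : (1 : ℝ) ≤ k := by exact_mod_cast hk
    exact mul_pos (by linarith) (by linarith)
  have hg' : ∀ u, HasDerivAt g (2 * ((α + β + 1) * u + α - β) /
      ((k : ℝ) * ((k : ℝ) + α + β + 1)) * (deriv (jacobiPN α β k) u) ^ 2) u := fun u =>
    hg ▸ hasDerivAt_energy_of_jacobi_ode hμ.ne' (differentiable_jacobiPN α β k u).hasDerivAt
      (differentiable_deriv_jacobiPN α β k u).hasDerivAt (jacobiPN_ode α β k u)
  refine ⟨fun u => (hg' u).deriv, fun hα₀ hβα => ?_⟩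
  refine monotoneOn_of_deriv_nonneg (convex_Icc 0 1) (HasDerivAt.continuousOn fun u _ => hg' u)
    (fun u _ => (hg' u).differentiableAt.differentiableWithinAt) fun u hu => ?_
  rw [interior_Icc] at hu
  have hslope : 0 ≤ (α + β + 1) * u + α - β := by
    nlinarith [mul_nonneg (show 0 ≤ α + β + 1 by linarith) hu.1.le]
  rw [(hg' u).deriv]
  positivity
end

section
/- Let α ≥ 0 and β > −1 be real numbers and let k ≥ 2 be an integer. If t satisfies x* < t < 1, where x* is the largest zero in (−1,1) of the Jacobi polynomial P_{k−1}^{(α+1,β+1)}, then the finite sequence P̂_0^{(α,β)}(t), P̂_1^{(α,β)}(t), …, P̂_k^{(α,β)}(t) is strictly decreasing; that is, P̂_j^{(α,β)}(t) > P̂_{j+1}^{(α,β)}(t) for j = 0, 1, …, k−1. -/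
open Finset

lemma genBinom_zero (x : ℝ) : genBinom x 0 = 1 := by simp [genBinom]

lemma genBinom_succ (x : ℝ) (j : ℕ) : genBinom x (j + 1) = (x - j) / (j + 1) * genBinom x j := by
  simp only [genBinom, prod_range_succ, Nat.factorial_succ]
  push_cast
  field_simp

lemma genBinom_add_one_succ (x : ℝ) (j : ℕ) :
    genBinom (x + 1) (j + 1) = (x + 1) / (j + 1) * genBinom x j := by
  simp only [genBinom, prod_range_succ', Nat.factorial_succ]
  push_cast
  simp only [add_sub_add_right_eq_sub, sub_zero]
  field_simp

lemma genBinom_nat_add_pos {a : ℝ} (ha : -1 < a) (n : ℕ) : 0 < genBinom (n + a) n := by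
  refine div_pos (prod_pos fun i hi => ?_) (mod_cast n.factorial_pos)
  have : (i : ℝ) + 1 ≤ n := mod_cast mem_range.mp hi
  linarith

def homSum (c : ℕ → ℝ) (n : ℕ) (u v : ℝ) : ℝ :=
  ∑ m ∈ range (n + 1), c m * u ^ m * v ^ (n - m)

lemma homSum_mul_right (c : ℕ → ℝ) (n : ℕ) (u v : ℝ) :
    homSum c n u v * v = homSum (fun m => if m = n + 1 then 0 else c m) (n + 1) u v := by
  rw [homSum, homSum, sum_range_succ _ (n + 1), if_pos rfl, zero_mul, zero_mul, add_zero, sum_mul]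
  refine sum_congr rfl fun m hm => ?_
  have hm : m ≤ n := Nat.lt_succ_iff.mp (mem_range.mp hm)
  rw [if_neg (by omega), Nat.sub_add_comm hm, pow_succ]
  ring

lemma homSum_mul_left (c : ℕ → ℝ) (n : ℕ) (u v : ℝ) :
    homSum c n u v * u = homSum (fun m => if m = 0 then 0 else c (m - 1)) (n + 1) u v := by
  rw [homSum, homSum, sum_range_succ' _ (n + 1), if_pos rfl, zero_mul, zero_mul, add_zero, sum_mul]
  refine sum_congr rfl fun m _ => ?_
  rw [if_neg m.succ_ne_zero, Nat.add_sub_cancel, Nat.add_sub_add_right, pow_succ]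
  ring

lemma jacobiP_eq_homSum (a b : ℝ) (n : ℕ) (x : ℝ) :
    jacobiP a b n x = homSum (fun m => genBinom (n + a) (n - m) * genBinom (n + b) m) n
      ((x - 1) / 2) ((x + 1) / 2) :=
  rfl

noncomputable def wronskian (f g : ℝ → ℝ) (x : ℝ) : ℝ := f x * deriv g x - deriv f x * g x

lemma mul_wronskian_of_three_term {f g h : ℝ → ℝ} {x c d E H : ℝ}
    (hf : DifferentiableAt ℝ f x) (hg : DifferentiableAt ℝ g x) (hh : DifferentiableAt ℝ h x)
    (hrec : ∀ y, E * h y = (c * y + d) * g y - H * f y) :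
    E * wronskian g h x = c * g x ^ 2 + H * wronskian f g x := by
  have hderiv : E * deriv h x = c * g x + (c * x + d) * deriv g x - H * deriv f x := by
    have hlhs : HasDerivAt (fun y => E * h y) (E * deriv h x) x := hh.hasDerivAt.const_mul E
    have hrhs : HasDerivAt (fun y => (c * y + d) * g y - H * f y)
        (c * g x + (c * x + d) * deriv g x - H * deriv f x) x := by
      have hlin : HasDerivAt (fun y => c * y + d) c x := by
        simpa using ((hasDerivAt_id x).const_mul c).add_const d
      simpa using (hlin.fun_mul hg.hasDerivAt).fun_sub (hf.hasDerivAt.const_mul H)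
    rw [funext hrec] at hlhs
    exact hlhs.unique hrhs
  simp only [wronskian]
  linear_combination g x * hderiv - deriv g x * hrec x

lemma pos_on_Ioc_of_ne_zero {g : ℝ → ℝ} {z w : ℝ} (hg : ContinuousOn g (Set.Ioc z w))
    (hgw : 0 < g w)
    (hne : ∀ x ∈ Set.Ioo z w, g x ≠ 0) : ∀ x ∈ Set.Ioc z w, 0 < g x := by
  intro x hx
  by_contra! hle
  obtain ⟨c, hc, hc0⟩ := isPreconnected_Ioc.intermediate_value hx
    ⟨hx.1.trans_le hx.2, le_rfl⟩ hg ⟨hle, hgw.le⟩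
  rcases hc.2.eq_or_lt with rfl | hlt
  · exact hgw.ne' hc0
  · exact hne c ⟨hc.1, hlt⟩ hc0

lemma pos_on_Ioc_of_wronskian_pos {g h : ℝ → ℝ} {z w : ℝ} (hg : Differentiable ℝ g)
    (hh : Differentiable ℝ h) (hW : ∀ x ∈ Set.Ioo z w, 0 < wronskian g h x)
    (hpos : ∀ x ∈ Set.Ioc z w, 0 < h x) (hgw : 0 < g w) : ∀ x ∈ Set.Ioc z w, 0 < g x := by
  have hanti : StrictAntiOn (fun x => g x / h x) (Set.Ioc z w) := by
    refine strictAntiOn_of_deriv_neg (convex_Ioc z w)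
      (hg.continuous.continuousOn.div hh.continuous.continuousOn fun x hx => (hpos x hx).ne') ?_
    rw [interior_Ioc]
    intro x hx
    have hx' : 0 < h x := hpos x (Set.Ioo_subset_Ioc_self hx)
    rw [deriv_fun_div (hg x) (hh x) hx'.ne']
    have hW' : deriv g x * h x - g x * deriv h x = -wronskian g h x := by
      rw [wronskian]
      ring
    rw [hW']
    exact div_neg_of_neg_of_pos (neg_lt_zero.mpr (hW x hx)) (by positivity)
  intro x hx
  rcases hx.2.eq_or_lt with rfl | hlt
  · exact hgw
  have hw : w ∈ Set.Ioc z w := ⟨hx.1.trans hlt, le_rfl⟩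
  have : 0 < g x / h x := (div_pos hgw (hpos w hw)).trans (hanti hx hw hlt)
  exact (div_pos_iff_of_pos_right (hpos x hx)).mp this

lemma jacobiP_sub_jacobiP_succ_coeff (a b : ℝ) {n m : ℕ} (hm : m ≤ n + 1) :
    (n + a + 1) * (if m = n + 1 then 0 else genBinom (n + a) (n - m) * genBinom (n + b) m)
      - (n + a + 1) *
        (if m = 0 then 0 else genBinom (n + a) (n - (m - 1)) * genBinom (n + b) (m - 1))
      - (n + 1) * (genBinom (n + 1 + a) (n + 1 - m) * genBinom (n + 1 + b) m)
      + (2 * n + a + b + 2) *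
        (if m = 0 then 0 else genBinom (n + (a + 1)) (n - (m - 1)) * genBinom (n + b) (m - 1))
      = 0 := by
  rcases m with _ | m
  · simp only [Nat.sub_zero, genBinom_zero, ↓reduceIte, n.succ_ne_zero.symm]
    rw [add_right_comm (n : ℝ) 1 a, genBinom_add_one_succ]
    field_simp
    ring
  rcases (by omega : m = n ∨ m < n) with rfl | hmn
  · simp only [m.succ_ne_zero, Nat.add_sub_cancel, Nat.sub_self, genBinom_zero, ↓reduceIte]
    rw [add_right_comm (m : ℝ) 1 b, genBinom_add_one_succ]
    field_simp
    ring
  obtain ⟨d, rfl⟩ : ∃ d, n = m + d + 1 := ⟨n - m - 1, by omega⟩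
  simp only [if_neg (by omega : m + 1 ≠ m + d + 1 + 1), if_neg m.succ_ne_zero, Nat.add_sub_cancel,
    show m + d + 1 - (m + 1) = d by omega, show m + d + 1 - m = d + 1 by omega,
    show m + d + 1 + 1 - (m + 1) = d + 1 by omega]
  push_cast
  set A : ℝ := m + d + 1 + a
  set B : ℝ := m + d + 1 + b
  rw [show (m : ℝ) + d + 1 + 1 + a = A + 1 by ring, show (m : ℝ) + d + 1 + (a + 1) = A + 1 by ring,
    show (m : ℝ) + d + 1 + 1 + b = B + 1 by ring, genBinom_add_one_succ, genBinom_add_one_succ,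
    genBinom_succ A, genBinom_succ B]
  field_simp
  ring

lemma jacobiP_sub_jacobiP_succ (a b : ℝ) (n : ℕ) (x : ℝ) :
    (n + a + 1) * jacobiP a b n x - (n + 1) * jacobiP a b (n + 1) x
      = (2 * n + a + b + 2) * ((1 - x) / 2) * jacobiP (a + 1) b n x := by
  -- With `u = (x-1)/2`, `v = (x+1)/2` we have `1 = v - u` and `(1-x)/2 = -u`: the identity becomes
  -- homogeneous of degree `n + 1` in `u, v`, and is checked coefficientwise.
  have key : (n + a + 1) * (jacobiP a b n x * ((x + 1) / 2))
      - (n + a + 1) * (jacobiP a b n x * ((x - 1) / 2)) - (n + 1) * jacobiP a b (n + 1) x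
      + (2 * n + a + b + 2) * (jacobiP (a + 1) b n x * ((x - 1) / 2)) = 0 := by
    simp only [jacobiP_eq_homSum, homSum_mul_right, homSum_mul_left]
    simp only [homSum, mul_sum, ← sum_sub_distrib, ← sum_add_distrib]
    refine sum_eq_zero fun m hm => ?_
    have := jacobiP_sub_jacobiP_succ_coeff a b (Nat.lt_succ_iff.mp (mem_range.mp hm))
    push_cast
    linear_combination ((x - 1) / 2) ^ m * ((x + 1) / 2) ^ (n + 1 - m) * this
  linear_combination key

lemma jacobiP_succ_eq_add_beta_coeff (a b : ℝ) {n m : ℕ} (hm : m ≤ n + 1) :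
    (2 * n + a + b + 3) * (genBinom (n + 1 + a) (n + 1 - m) * genBinom (n + 1 + b) m)
      - (n + a + b + 2) * (genBinom (n + 1 + a) (n + 1 - m) * genBinom (n + 1 + (b + 1)) m)
      - (n + a + 1) *
        (if m = n + 1 then 0 else genBinom (n + a) (n - m) * genBinom (n + (b + 1)) m)
      + (n + a + 1) *
        (if m = 0 then 0 else genBinom (n + a) (n - (m - 1)) * genBinom (n + (b + 1)) (m - 1))
      = 0 := by
  rcases m with _ | m
  · simp only [Nat.sub_zero, genBinom_zero, ↓reduceIte, n.succ_ne_zero.symm]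
    rw [add_right_comm (n : ℝ) 1 a, genBinom_add_one_succ]
    field_simp
    ring
  rcases (by omega : m = n ∨ m < n) with rfl | hmn
  · simp only [m.succ_ne_zero, Nat.add_sub_cancel, Nat.sub_self, genBinom_zero, ↓reduceIte]
    rw [show (m : ℝ) + 1 + b = m + b + 1 by ring,
      show (m : ℝ) + 1 + (b + 1) = m + b + 1 + 1 by ring,
      show (m : ℝ) + (b + 1) = m + b + 1 by ring, genBinom_add_one_succ (m + b + 1),
      genBinom_succ (m + b + 1)]
    field_simp
    ring
  obtain ⟨d, rfl⟩ : ∃ d, n = m + d + 1 := ⟨n - m - 1, by omega⟩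
  simp only [if_neg (by omega : m + 1 ≠ m + d + 1 + 1), if_neg m.succ_ne_zero, Nat.add_sub_cancel,
    show m + d + 1 - (m + 1) = d by omega, show m + d + 1 - m = d + 1 by omega,
    show m + d + 1 + 1 - (m + 1) = d + 1 by omega]
  push_cast
  set A : ℝ := m + d + 1 + a
  set B : ℝ := m + d + 1 + (b + 1)
  rw [show (m : ℝ) + d + 1 + 1 + a = A + 1 by ring, show (m : ℝ) + d + 1 + 1 + b = B by ring,
    show (m : ℝ) + d + 1 + 1 + (b + 1) = B + 1 by ring, genBinom_add_one_succ,
    genBinom_add_one_succ,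
    genBinom_succ A, genBinom_succ B]
  field_simp
  ring

lemma jacobiP_succ_eq_add_beta (a b : ℝ) (n : ℕ) (x : ℝ) :
    (2 * n + a + b + 3) * jacobiP a b (n + 1) x
      = (n + a + b + 2) * jacobiP a (b + 1) (n + 1) x + (n + a + 1) * jacobiP a (b + 1) n x := by
  have key : (2 * n + a + b + 3) * jacobiP a b (n + 1) x
      - (n + a + b + 2) * jacobiP a (b + 1) (n + 1) x
      - (n + a + 1) * (jacobiP a (b + 1) n x * ((x + 1) / 2))
      + (n + a + 1) * (jacobiP a (b + 1) n x * ((x - 1) / 2)) = 0 := by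
    simp only [jacobiP_eq_homSum, homSum_mul_right, homSum_mul_left]
    simp only [homSum, mul_sum, ← sum_sub_distrib, ← sum_add_distrib]
    refine sum_eq_zero fun m hm => ?_
    have := jacobiP_succ_eq_add_beta_coeff a b (Nat.lt_succ_iff.mp (mem_range.mp hm))
    push_cast
    linear_combination ((x - 1) / 2) ^ m * ((x + 1) / 2) ^ (n + 1 - m) * this
  linear_combination key

lemma jacobiP_neg (a b : ℝ) (n : ℕ) (x : ℝ) :
    jacobiP a b n (-x) = (-1) ^ n * jacobiP b a n x := by
  rw [jacobiP, jacobiP, mul_sum, ← sum_range_reflect]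
  refine sum_congr rfl fun m hm => ?_
  obtain ⟨d, rfl⟩ : ∃ d, n = m + d := ⟨n - m, by have := mem_range.mp hm; omega⟩
  rw [show m + d + 1 - 1 - m = d by omega, show m + d - d = m by omega, Nat.add_sub_cancel_left,
    show (-x - 1) / 2 = -((x + 1) / 2) by ring, show (-x + 1) / 2 = -((x - 1) / 2) by ring,
    neg_pow ((x + 1) / 2), neg_pow ((x - 1) / 2), pow_add]
  ring

lemma jacobiP_succ_eq_sub_alpha (a b : ℝ) (n : ℕ) (x : ℝ) :
    (2 * n + a + b + 3) * jacobiP a b (n + 1) x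
      = (n + a + b + 2) * jacobiP (a + 1) b (n + 1) x - (n + b + 1) * jacobiP (a + 1) b n x := by
  have h := jacobiP_succ_eq_add_beta b a n (-x)
  simp only [jacobiP_neg, pow_succ] at h
  have hsign : ((-1 : ℝ) ^ n) ^ 2 = 1 := by rw [← pow_mul, mul_comm, pow_mul, neg_one_sq, one_pow]
  linear_combination (-(-1 : ℝ) ^ n) * h - ((2 * n + a + b + 3) * jacobiP a b (n + 1) x
    - (n + a + b + 2) * jacobiP (a + 1) b (n + 1) x + (n + b + 1) * jacobiP (a + 1) b n x) * hsign

lemma jacobiP_three_term (a b : ℝ) (n : ℕ) (x : ℝ) :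
    2 * (n + 2) * (n + a + b + 2) * (2 * n + a + b + 2) * jacobiP a b (n + 2) x
      = ((2 * n + a + b + 3) * (2 * n + a + b + 2) * (2 * n + a + b + 4) * x
          + (2 * n + a + b + 3) * (a ^ 2 - b ^ 2)) * jacobiP a b (n + 1) x
        - 2 * (n + a + 1) * (n + b + 1) * (2 * n + a + b + 4) * jacobiP a b n x := by
  have h₁ := jacobiP_sub_jacobiP_succ a b (n + 1) x
  have h₀ := jacobiP_sub_jacobiP_succ a b n x
  have h := jacobiP_succ_eq_sub_alpha a b n x
  push_cast at h₁
  linear_combination (1 - x) * (2 * n + a + b + 4) * (2 * n + a + b + 2) * h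
    - 2 * (n + a + b + 2) * (2 * n + a + b + 2) * h₁ + 2 * (n + b + 1) * (2 * n + a + b + 4) * h₀

lemma jacobiP_zero (a b : ℝ) : jacobiP a b 0 = fun _ => 1 := by
  funext x
  simp [jacobiP, genBinom_zero]

lemma jacobiP_one (a b : ℝ) : jacobiP a b 1 = fun x => (a + b + 2) / 2 * x + (a - b) / 2 := by
  funext x
  simp only [jacobiP, sum_range_succ, Nat.sub_zero, Nat.sub_self, genBinom_succ _ 0,
    genBinom_zero]
  push_cast
  ring

lemma jacobiP_apply_one (a b : ℝ) (n : ℕ) : jacobiP a b n 1 = genBinom (n + a) n := by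
  rw [jacobiP, sum_eq_single 0 (fun m _ hm => by simp [zero_pow hm]) (by simp)]
  simp [genBinom_zero]

lemma jacobiP_differentiable (a b : ℝ) (n : ℕ) : Differentiable ℝ (jacobiP a b n) := by
  unfold jacobiP
  fun_prop

lemma jacobiP_wronskian_pos {a b : ℝ} (ha : -1 < a) (hb : -1 < b) (n : ℕ) (x : ℝ) :
    0 < wronskian (jacobiP a b n) (jacobiP a b (n + 1)) x := by
  induction n with
  | zero =>
    simp only [wronskian, zero_add, jacobiP_zero, jacobiP_one, deriv_add_const',
      deriv_const_mul_id', deriv_const']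
    linarith
  | succ n ih =>
    have hn : (0 : ℝ) ≤ n := n.cast_nonneg
    have key := mul_wronskian_of_three_term (jacobiP_differentiable a b n x)
      (jacobiP_differentiable a b (n + 1) x) (jacobiP_differentiable a b (n + 2) x)
      (jacobiP_three_term a b n)
    have hE : 0 < 2 * (n + 2) * (n + a + b + 2) * (2 * n + a + b + 2) := by
      have : 0 < (n : ℝ) + a + b + 2 := by linarith
      have : 0 < 2 * (n : ℝ) + a + b + 2 := by linarith
      positivity
    have hc : 0 < (2 * n + a + b + 3) * (2 * n + a + b + 2) * (2 * n + a + b + 4) := by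
      have : 0 < 2 * (n : ℝ) + a + b + 2 := by linarith
      have : 0 < 2 * (n : ℝ) + a + b + 3 := by linarith
      have : 0 < 2 * (n : ℝ) + a + b + 4 := by linarith
      positivity
    have hH : 0 < 2 * (n + a + 1) * (n + b + 1) * (2 * n + a + b + 4) := by
      have : 0 < (n : ℝ) + a + 1 := by linarith
      have : 0 < (n : ℝ) + b + 1 := by linarith
      have : 0 < 2 * (n : ℝ) + a + b + 4 := by linarith
      positivity
    refine pos_of_mul_pos_right ?_ hE.le
    rw [key]
    exact add_pos_of_nonneg_of_pos (mul_nonneg hc.le (sq_nonneg _)) (mul_pos hH ih)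

lemma jacobiP_pos_on_Ioc_of_le {a b z : ℝ} (ha : -1 < a) (hb : -1 < b) {K : ℕ}
    (hK : ∀ x ∈ Set.Ioc z 1, 0 < jacobiP a b K x) {n : ℕ} (hn : n ≤ K) :
    ∀ x ∈ Set.Ioc z 1, 0 < jacobiP a b n x := by
  induction hn using Nat.decreasingInduction with
  | self => exact hK
  | of_succ n _ ih =>
    refine pos_on_Ioc_of_wronskian_pos (jacobiP_differentiable a b n)
      (jacobiP_differentiable a b (n + 1)) (fun x _ => jacobiP_wronskian_pos ha hb n x) ih ?_
    rw [jacobiP_apply_one]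
    exact genBinom_nat_add_pos ha n

lemma jacobiP_succ_pos_of_beta_add_one {a b x : ℝ} (ha : -1 < a) (hb : -1 < b) {n : ℕ}
    (h₁ : 0 < jacobiP a (b + 1) (n + 1) x) (h₀ : 0 < jacobiP a (b + 1) n x) :
    0 < jacobiP a b (n + 1) x := by
  have hn : (0 : ℝ) ≤ n := n.cast_nonneg
  refine pos_of_mul_pos_right (a := 2 * n + a + b + 3) ?_ (by linarith)
  rw [jacobiP_succ_eq_add_beta]
  exact add_pos (mul_pos (by linarith) h₁) (mul_pos (by linarith) h₀)

lemma jacobiPN_sub_jacobiPN_succ {a : ℝ} (ha : -1 < a) (b : ℝ) (n : ℕ) (x : ℝ) :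
    jacobiPN a b n x - jacobiPN a b (n + 1) x
      = (2 * n + a + b + 2) * ((1 - x) / 2) * jacobiP (a + 1) b n x
        / ((n + a + 1) * genBinom (n + a) n) := by
  have hC := (genBinom_nat_add_pos ha n).ne'
  have hn : (n : ℝ) + a + 1 ≠ 0 := by linarith [(n.cast_nonneg : (0 : ℝ) ≤ n)]
  rw [← jacobiP_sub_jacobiP_succ, jacobiPN, jacobiPN, Nat.cast_succ, add_right_comm (n : ℝ) 1 a,
    genBinom_add_one_succ]
  field_simp

theorem jacobi_decreasing_in_degree_general
    (α β : ℝ) (hα : 0 ≤ α) (hβ : -1 < β) (k : ℕ)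
    (xstar t : ℝ)
    (hx : IsGreatest
      {y | y ∈ Set.Ioo (-1 : ℝ) 1 ∧ jacobiP (α + 1) (β + 1) (k - 1) y = 0} xstar)
    (ht : xstar < t) (ht1 : t < 1) :
    ∀ j, j < k → jacobiPN α β (j + 1) t < jacobiPN α β j t := by
  rcases k with _ | K
  · exact fun j hj => absurd hj j.not_lt_zero
  obtain ⟨⟨hxI, -⟩, hxmax⟩ := hx
  have ha : -1 < α + 1 := by linarith
  have hK : ∀ y ∈ Set.Ioc xstar 1, 0 < jacobiP (α + 1) (β + 1) K y := by
    refine pos_on_Ioc_of_ne_zero (jacobiP_differentiable _ _ _).continuous.continuousOn ?_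
      fun y hy hy0 => (hxmax ⟨⟨hxI.1.trans hy.1, hy.2⟩, by simpa using hy0⟩).not_gt hy.1
    rw [jacobiP_apply_one]
    exact genBinom_nat_add_pos ha K
  have hpos : ∀ n ≤ K, 0 < jacobiP (α + 1) (β + 1) n t := fun n hn =>
    jacobiP_pos_on_Ioc_of_le ha (by linarith) hK hn t ⟨ht, ht1.le⟩
  have hQ : ∀ j ≤ K, 0 < jacobiP (α + 1) β j t := by
    rintro (_ | j) hj
    · simp [jacobiP_zero]
    · exact jacobiP_succ_pos_of_beta_add_one ha hβ (hpos _ hj) (hpos _ (by omega))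
  intro j hj
  have hj' : (0 : ℝ) ≤ j := j.cast_nonneg
  rw [← sub_pos, jacobiPN_sub_jacobiPN_succ (by linarith)]
  exact div_pos (mul_pos (mul_pos (by linarith) (by linarith)) (hQ j (by omega)))
    (mul_pos (by linarith) (genBinom_nat_add_pos (by linarith) j))

/-- for `α ≥ 0`, `β > -1`, `k ≥ 2`, and `x* < t < 1` where `x*`
is the largest zero in `(-1,1)` of the Jacobi polynomial `P_{k-1}^{(α+1,β+1)}`,
the sequence `P̂_0^{(α,β)}(t), P̂_1^{(α,β)}(t), …, P̂_k^{(α,β)}(t)` is strictly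
decreasing. -/
theorem jacobi_decreasing_in_degree
    (α β : ℝ) (hα : 0 ≤ α) (hβ : -1 < β) (k : ℕ) (hk : 2 ≤ k)
    (xstar t : ℝ)
    (hx : IsGreatest
      {y | y ∈ Set.Ioo (-1 : ℝ) 1 ∧ jacobiP (α + 1) (β + 1) (k - 1) y = 0} xstar)
    (ht : xstar < t) (ht1 : t < 1) :
    ∀ j, j < k → jacobiPN α β (j + 1) t < jacobiPN α β j t :=
  jacobi_decreasing_in_degree_general α β hα hβ k xstar t hx ht ht1
end
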